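/- arXiv:1206.5703 — 6 statements merged into one kernel-verified Lean document; each statement's English description precedes it below -/
import Mathlib

section
/- Let X be a Banach space, S ⊆ L(X) a semigroup of bounded operators containing the identity, (A_α)_{α∈Λ} a net of bounded operators on X, and x ∈ X such that lim_α (S−I)A_α x = 0 in norm for all S ∈ S. Suppose Z ⊆ X* separates points of X and S*Z ⊆ Z for all S ∈ S. Then every σ(X,Z)-cluster point of the net (A_α x) belongs to fix(S) = ⋂_{S∈S} ker(I−S). -/
open Filter Topology

theorem MapClusterPt.apply_eq_of_tendsto {X Y ι : Type*} [TopologicalSpace X] [TopologicalSpace Y]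
    [T2Space Y] {F : Filter ι} {u : ι → X} {w : X} (hw : MapClusterPt w F u) {f : X → Y}
    (hf : Continuous f) {y : Y} (hy : Tendsto (f ∘ u) F (𝓝 y)) : f w = y :=
  eq_of_nhds_neBot ((hw.continuousAt_comp hf.continuousAt).clusterPt.mono hy)

theorem continuous_apply_induced_pi {X ι : Type*} {π : ι → Type*} [∀ i, TopologicalSpace (π i)]
    (φ : X → ∀ i, π i) (i : ι) :
    Continuous[TopologicalSpace.induced φ Pi.topologicalSpace, _] (fun v => φ v i) := by
  let _ := TopologicalSpace.induced φ Pi.topologicalSpace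
  exact (continuous_apply i).comp continuous_induced_dom

theorem stmt1_general {X : Type*} [NormedAddCommGroup X] [NormedSpace ℝ X]
    (𝒮 : Set (X →L[ℝ] X))
    {ι : Type*} [Preorder ι]
    (A : ι → X →L[ℝ] X) (x : X)
    (hconv : ∀ s ∈ 𝒮, Tendsto (fun α : ι => s (A α x) - A α x) atTop (nhds 0))
    (Z : Submodule ℝ (X →L[ℝ] ℝ))
    (hsep : ∀ v : X, v ≠ 0 → ∃ z ∈ Z, z v ≠ 0)
    (hinv : ∀ s ∈ 𝒮, ∀ z ∈ Z, z.comp s ∈ Z)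
    (w : X)
    (hw : @MapClusterPt X
      (TopologicalSpace.induced (fun v : X => fun z : Z => (z : X →L[ℝ] ℝ) v)
        Pi.topologicalSpace)
      ι w atTop (fun α : ι => A α x)) :
    ∀ s ∈ 𝒮, s w = w := by
  intro s hs
  have hlim (z : X →L[ℝ] ℝ) : Tendsto (fun α => z (s (A α x)) - z (A α x)) atTop (𝓝 0) := by
    simpa [Function.comp_def] using (z.continuous.tendsto 0).comp (hconv s hs)
  -- From here on the topology instance on `X` is `σ(X,Z)` instead of the norm topology.
  let φ : X → Z → ℝ := fun v z => (z : X →L[ℝ] ℝ) v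
  let _ : TopologicalSpace X := TopologicalSpace.induced φ Pi.topologicalSpace
  -- `z ∘ (s - 1)` is `σ(X,Z)`-continuous because `S*Z ⊆ Z`.
  have hz_eq : ∀ z ∈ Z, z (s w - w) = 0 := fun z hz => by
    have hcont := (continuous_apply_induced_pi φ ⟨_, hinv s hs z hz⟩).sub
      (continuous_apply_induced_pi φ ⟨z, hz⟩)
    simpa [φ] using hw.apply_eq_of_tendsto hcont (hlim z)
  by_contra hne
  obtain ⟨z, hz, hzv⟩ := hsep _ (sub_ne_zero.mpr hne)
  exact hzv (hz_eq z hz)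

/-- Lemma 4.4: every `σ(X,Z)`-cluster point of the net `(A_α x)` belongs to the
fixed space of the semigroup `𝒮`, provided `(S-I)A_α x → 0` in norm for all `S ∈ 𝒮`,
`Z ⊆ X*` separates points of `X` and `S*Z ⊆ Z`. -/
theorem stmt1 {X : Type*} [NormedAddCommGroup X] [NormedSpace ℝ X] [CompleteSpace X]
    (𝒮 : Set (X →L[ℝ] X)) (hone : (1 : X →L[ℝ] X) ∈ 𝒮)
    (hmul : ∀ s ∈ 𝒮, ∀ t ∈ 𝒮, s.comp t ∈ 𝒮)
    {ι : Type*} [Preorder ι] [Nonempty ι] [IsDirected ι (· ≤ ·)]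
    (A : ι → X →L[ℝ] X) (x : X)
    (hconv : ∀ s ∈ 𝒮, Tendsto (fun α : ι => s (A α x) - A α x) atTop (nhds 0))
    (Z : Submodule ℝ (X →L[ℝ] ℝ))
    (hsep : ∀ v : X, v ≠ 0 → ∃ z ∈ Z, z v ≠ 0)
    (hinv : ∀ s ∈ 𝒮, ∀ z ∈ Z, z.comp s ∈ Z)
    (w : X)
    (hw : @MapClusterPt X
      (TopologicalSpace.induced (fun v : X => fun z : Z => (z : X →L[ℝ] ℝ) v)
        Pi.topologicalSpace)
      ι w atTop (fun α : ι => A α x)) :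
    ∀ s ∈ 𝒮, s w = w :=
  stmt1_general 𝒮 A x hconv Z hsep hinv w hw
end

section
/- Let (S, A) be an average scheme on a norming dual pair (X,Y), let τ be a locally convex topology on X finer than σ(X,Y), and set X₁ := {x ∈ X : the net (A_α x) clusters in (X,τ)}. If fix(S') separates fix(S), then τ-lim_α A_α x exists in X for every x ∈ X₁. -/
open Filter Topology Set

noncomputable section

/-- A norming dual pair `(X, Y, ⟨·,·⟩)`: Banach spaces `X`, `Y` with a bilinear duality
such that each norm is recovered as a supremum of pairings against the unit ball. -/
structure NormingDualPair (X Y : Type*) [NormedAddCommGroup X] [NormedSpace ℝ X]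
    [NormedAddCommGroup Y] [NormedSpace ℝ Y] : Type _ where
  p : X →ₗ[ℝ] Y →ₗ[ℝ] ℝ
  norm_eq_left : ∀ x : X, ‖x‖ = ⨆ y : {y : Y // ‖y‖ ≤ 1}, |p x y.1|
  norm_eq_right : ∀ y : Y, ‖y‖ = ⨆ x : {x : X // ‖x‖ ≤ 1}, |p x.1 y|

variable {X Y : Type*} [NormedAddCommGroup X] [NormedSpace ℝ X]
  [NormedAddCommGroup Y] [NormedSpace ℝ Y]

/-- The weak topology `σ(X,Y)` on `X` induced by the pairing. -/
def NormingDualPair.sigma (ndp : NormingDualPair X Y) : TopologicalSpace X :=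
  TopologicalSpace.induced (fun x => fun y : Y => ndp.p x y) Pi.topologicalSpace

/-- The weak topology `σ(Y,X)` on `Y` induced by the pairing. -/
def NormingDualPair.sigma' (ndp : NormingDualPair X Y) : TopologicalSpace Y :=
  TopologicalSpace.induced (fun y => fun x : X => ndp.p x y) Pi.topologicalSpace

/-- The fixed space `fix(𝒮) = ⋂_{S ∈ 𝒮} ker (I - S)`. -/
def fixedSpace (S : Set (X →L[ℝ] X)) : Set X := {x | ∀ s ∈ S, s x = x}

/-- The range `rg(I - 𝒮) = {x - Sx : x ∈ X, S ∈ 𝒮}`. -/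
def rangeIminus (S : Set (X →L[ℝ] X)) : Set X := {z | ∃ x : X, ∃ s ∈ S, z = x - s x}

/-- An average scheme `(𝒮, (A_α)_{α ∈ ι})` on a norming dual pair `(X,Y)`:
a semigroup `𝒮 ⊆ L(X,σ)` (σ-continuity encoded via the existence of adjoints on `Y`)
and a net of σ-continuous operators satisfying (AS1)-(AS3). -/
structure AverageScheme (ndp : NormingDualPair X Y) (ι : Type*) [Preorder ι] : Type _ where
  S : Set (X →L[ℝ] X)
  adj : (X →L[ℝ] X) → (Y →L[ℝ] Y)
  one_mem : (1 : X →L[ℝ] X) ∈ S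
  comp_mem : ∀ s ∈ S, ∀ t ∈ S, s.comp t ∈ S
  adj_spec : ∀ s ∈ S, ∀ (x : X) (y : Y), ndp.p (s x) y = ndp.p x (adj s y)
  A : ι → (X →L[ℝ] X)
  A' : ι → (Y →L[ℝ] Y)
  A'_spec : ∀ (α : ι) (x : X) (y : Y), ndp.p (A α x) y = ndp.p x (A' α y)
  normBound : ∃ M : ℝ, ∀ α : ι, ‖A α‖ ≤ M
  as2 : ∀ (α : ι) (x : X),
    A α x ∈ @closure X ndp.sigma (convexHull ℝ {z | ∃ s ∈ S, z = s x})
  as2' : ∀ (α : ι) (y : Y),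
    A' α y ∈ @closure Y ndp.sigma' (convexHull ℝ {z | ∃ s ∈ S, z = adj s y})
  as3_left : ∀ s ∈ S, ∀ x : X, Tendsto (fun α : ι => A α (s x - x)) atTop (nhds 0)
  as3_right : ∀ s ∈ S, ∀ x : X, Tendsto (fun α : ι => s (A α x) - A α x) atTop (nhds 0)
  as3'_left : ∀ s ∈ S, ∀ y : Y, Tendsto (fun α : ι => A' α (adj s y - y)) atTop (nhds 0)
  as3'_right : ∀ s ∈ S, ∀ y : Y, Tendsto (fun α : ι => adj s (A' α y) - A' α y) atTop (nhds 0)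

/-- The fixed space of the adjoint semigroup `fix(𝒮')` in `Y`. -/
def AverageScheme.fix' {ι : Type*} [Preorder ι] {ndp : NormingDualPair X Y}
    (AS : AverageScheme ndp ι) : Set Y := {y | ∀ s ∈ AS.S, AS.adj s y = y}

/-- The range `rg(I - 𝒮')` in `Y`. -/
def AverageScheme.rg' {ι : Type*} [Preorder ι] {ndp : NormingDualPair X Y}
    (AS : AverageScheme ndp ι) : Set Y := {z | ∃ y : Y, ∃ s ∈ AS.S, z = y - AS.adj s y}

/-- A filter (net) clusters in a topology: every finer nontrivial filter (subnet) has a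
cluster point (i.e. a convergent subnet). -/
def ClustersIn {Z : Type*} (τ : TopologicalSpace Z) (F : Filter Z) : Prop :=
  ∀ G : Filter Z, G ≤ F → G.NeBot → ∃ z : Z, @ClusterPt Z τ z G

/-- Weak ergodicity: `σ`-convergence of `A_α x` for every `x` and `σ'`-convergence of
`A'_α y` for every `y`. -/
def AverageScheme.WeaklyErgodic {ι : Type*} [Preorder ι] {ndp : NormingDualPair X Y}
    (AS : AverageScheme ndp ι) : Prop :=
  (∀ x : X, ∃ l : X, Tendsto (fun α : ι => AS.A α x) atTop (@nhds X ndp.sigma l)) ∧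
  (∀ y : Y, ∃ l : Y, Tendsto (fun α : ι => AS.A' α y) atTop (@nhds Y ndp.sigma' l))

/-- The fixed space as a submodule. -/
def fixedSubmodule (S : Set (X →L[ℝ] X)) : Submodule ℝ X where
  carrier := {x | ∀ s ∈ S, s x = x}
  add_mem' := by
    intro a b ha hb s hs
    simp only [Set.mem_setOf_eq] at *
    rw [map_add, ha s hs, hb s hs]
  zero_mem' := by
    intro s hs
    simp
  smul_mem' := by
    intro c x hx s hs
    simp only [Set.mem_setOf_eq] at *
    rw [map_smul, hx s hs]

/-!
Every `σ(X,Y)`-cluster point `z` of `(A_α x)` is fixed by `𝒮`, because `s (A_α x) - A_α x → 0`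
in norm, and pairs with each `y ∈ fix(𝒮')` as `x` does, because
`⟨A_α x, y⟩ = ⟨x, A'_α y⟩ = ⟨x, y⟩`. Since `fix(𝒮')` separates `fix(𝒮)`, there is at most one
such point. A `τ`-cluster point is a `σ`-cluster point, and a net that clusters and has at most
one cluster point converges to it.
-/

lemma MapClusterPt.eq_of_tendsto {α Z β : Type*} [TopologicalSpace Z] [TopologicalSpace β]
    [T2Space β] {l : Filter α} {u : α → Z} {z : Z} (hz : MapClusterPt z l u) {f : Z → β}
    (hf : Continuous f) {c : β} (hfu : Tendsto (f ∘ u) l (𝓝 c)) : f z = c :=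
  eq_of_nhds_neBot ((hz.continuousAt_comp hf.continuousAt).clusterPt.mono hfu)

lemma exists_le_nhds_of_clustersIn {Z : Type*} [TopologicalSpace Z] [Nonempty Z]
    {F : Filter Z} (hF : ClustersIn ‹_› F) (huniq : {z | ClusterPt z F}.Subsingleton) :
    ∃ z, F ≤ 𝓝 z := by
  rcases F.eq_or_neBot with rfl | hne
  · exact ⟨Classical.arbitrary Z, bot_le⟩
  obtain ⟨z, hz⟩ := hF F le_rfl hne
  refine ⟨z, fun U hU => by_contra fun hUF => ?_⟩
  obtain ⟨z', hz'⟩ := hF _ inf_le_left (notMem_iff_inf_principal_compl.mp hUF)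
  obtain rfl : z' = z := huniq (hz'.mono inf_le_left) hz
  obtain ⟨w, hwU, hwUc⟩ := clusterPt_principal_iff.mp (hz'.mono inf_le_right) U hU
  exact hwUc hwU

namespace NormingDualPair

variable (ndp : NormingDualPair X Y)

lemma abs_p_le (x : X) (y : Y) : |ndp.p x y| ≤ ‖x‖ * ‖y‖ := by
  rcases eq_or_ne y 0 with rfl | hy
  · simp
  by_cases hbdd : BddAbove (range fun y : {y : Y // ‖y‖ ≤ 1} => |ndp.p x y.1|)
  · have hy₀ : 0 < ‖y‖ := norm_pos_iff.mpr hy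
    have hunit : ‖‖y‖⁻¹ • y‖ ≤ 1 := by
      rw [norm_smul, norm_inv, norm_norm, inv_mul_cancel₀ hy₀.ne']
    have hle : ‖y‖⁻¹ * |ndp.p x y| ≤ ‖x‖ := by
      simpa [ndp.norm_eq_left x, abs_mul, abs_inv] using le_ciSup hbdd ⟨_, hunit⟩
    rwa [inv_mul_le_iff₀ hy₀, mul_comm] at hle
  · obtain rfl : x = 0 := by
      rw [← norm_eq_zero, ndp.norm_eq_left x, Real.iSup_of_not_bddAbove hbdd]
    simp

lemma eq_zero_of_forall_p_eq_zero {x : X} (h : ∀ y, ndp.p x y = 0) : x = 0 := by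
  rw [← norm_eq_zero, ndp.norm_eq_left x]
  simp [h]

lemma continuous_p_left (y : Y) : Continuous fun x => ndp.p x y :=
  AddMonoidHomClass.continuous_of_bound (ndp.p.flip y) ‖y‖ fun x => by
    simpa [mul_comm] using ndp.abs_p_le x y

lemma continuous_sigma_p_left (y : Y) : Continuous[ndp.sigma, _] fun x => ndp.p x y :=
  @Continuous.comp X (Y → ℝ) ℝ ndp.sigma _ _ _ _ (continuous_apply y) continuous_induced_dom

lemma continuous_sigma'_p_right (x : X) : Continuous[ndp.sigma', _] fun y => ndp.p x y :=
  @Continuous.comp Y (X → ℝ) ℝ ndp.sigma' _ _ _ _ (continuous_apply x) continuous_induced_dom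

end NormingDualPair

namespace AverageScheme

variable {ι : Type*} [Preorder ι] {ndp : NormingDualPair X Y} (AS : AverageScheme ndp ι)

lemma p_A_of_mem_fix' {y : Y} (hy : y ∈ AS.fix') (α : ι) (x : X) :
    ndp.p (AS.A α x) y = ndp.p x y := by
  have horbit : {z | ∃ s ∈ AS.S, z = AS.adj s y} = {y} := by
    ext z
    constructor
    · rintro ⟨s, hs, rfl⟩
      exact hy s hs
    · rintro rfl
      exact ⟨1, AS.one_mem, (hy 1 AS.one_mem).symm⟩
  have hA' := AS.as2' α y
  rw [horbit, convexHull_singleton] at hA'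
  rw [AS.A'_spec]
  have hmem := @map_mem_closure Y ℝ ndp.sigma' _ _ _ _ ({ndp.p x y} : Set ℝ)
    (ndp.continuous_sigma'_p_right x) hA' (mapsTo_singleton.2 rfl)
  rwa [closure_singleton] at hmem

variable {AS} {x z : X}

lemma mem_fixedSpace_of_mapClusterPt
    (hz : @MapClusterPt X ndp.sigma ι z atTop fun α => AS.A α x) : z ∈ fixedSpace AS.S := by
  intro s hs
  rw [← sub_eq_zero]
  refine ndp.eq_zero_of_forall_p_eq_zero fun y => ?_
  have hpair : ∀ w, ndp.p (s w - w) y = ndp.p w (AS.adj s y) - ndp.p w y := fun w => by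
    rw [map_sub, LinearMap.sub_apply, AS.adj_spec s hs]
  have hcont : Continuous[ndp.sigma, _] fun w => ndp.p w (AS.adj s y) - ndp.p w y :=
    @Continuous.sub ℝ X ndp.sigma _ _ _ _ _
      (ndp.continuous_sigma_p_left _) (ndp.continuous_sigma_p_left y)
  have hnull := ((ndp.continuous_p_left y).tendsto 0).comp (AS.as3_right s hs x)
  simp only [map_zero, LinearMap.zero_apply] at hnull
  rw [hpair]
  refine @MapClusterPt.eq_of_tendsto _ _ _ ndp.sigma _ _ _ _ _ hz _ hcont _ ?_
  simpa only [Function.comp_def, hpair] using hnull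

lemma p_eq_of_mapClusterPt (hz : @MapClusterPt X ndp.sigma ι z atTop fun α => AS.A α x)
    {y : Y} (hy : y ∈ AS.fix') : ndp.p z y = ndp.p x y :=
  @MapClusterPt.eq_of_tendsto _ _ _ ndp.sigma _ _ _ _ _ hz _
    (ndp.continuous_sigma_p_left y) _
    (tendsto_const_nhds.congr fun α => (AS.p_A_of_mem_fix' hy α x).symm)

lemma subsingleton_mapClusterPt
    (hsep : ∀ x ∈ fixedSpace AS.S, x ≠ 0 → ∃ y ∈ AS.fix', ndp.p x y ≠ 0) (x : X) :
    {z | @MapClusterPt X ndp.sigma ι z atTop fun α => AS.A α x}.Subsingleton := by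
  intro z₁ hz₁ z₂ hz₂
  by_contra hne
  have hfix : z₁ - z₂ ∈ fixedSpace AS.S := fun s hs => by
    rw [map_sub, mem_fixedSpace_of_mapClusterPt hz₁ s hs, mem_fixedSpace_of_mapClusterPt hz₂ s hs]
  obtain ⟨y, hy, hpy⟩ := hsep _ hfix (sub_ne_zero.mpr hne)
  apply hpy
  rw [map_sub, LinearMap.sub_apply, p_eq_of_mapClusterPt hz₁ hy, p_eq_of_mapClusterPt hz₂ hy,
    sub_self]

end AverageScheme

theorem stmt6_general {ι : Type*} [Preorder ι]
    (ndp : NormingDualPair X Y) (AS : AverageScheme ndp ι)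
    (τ : TopologicalSpace X) (hτ : τ ≤ ndp.sigma)
    (hsep : ∀ x ∈ fixedSpace AS.S, x ≠ 0 → ∃ y ∈ AS.fix', ndp.p x y ≠ 0) :
    ∀ x : X, ClustersIn τ (Filter.map (fun α : ι => AS.A α x) atTop) →
      ∃ l : X, Tendsto (fun α : ι => AS.A α x) atTop (@nhds X τ l) := by
  intro x hcl
  refine @exists_le_nhds_of_clustersIn X τ _ _ hcl ?_
  exact (AS.subsingleton_mapClusterPt hsep x).anti fun z hz =>
    NeBot.mono hz (inf_le_inf_right _ (nhds_mono hτ))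

theorem stmt6 {ι : Type*} [Preorder ι] [Nonempty ι] [IsDirected ι (· ≤ ·)]
    (ndp : NormingDualPair X Y) (AS : AverageScheme ndp ι)
    (τ : TopologicalSpace X) (hτ : τ ≤ ndp.sigma)
    (hsep : ∀ x ∈ fixedSpace AS.S, x ≠ 0 → ∃ y ∈ AS.fix', ndp.p x y ≠ 0) :
    ∀ x : X, ClustersIn τ (Filter.map (fun α : ι => AS.A α x) atTop) →
      ∃ l : X, Tendsto (fun α : ι => AS.A α x) atTop (@nhds X τ l) :=
  stmt6_general ndp AS τ hτ hsep
end
end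

section
/- Let (S, A) be a weakly ergodic average scheme on a norming dual pair (X,Y). Then X = fix(S) ⊕ span‾^σ rg(I−S) and Y = fix(S') ⊕ span‾^{σ'} rg(I−S'). -/
open Filter Topology Set

noncomputable section

variable {X Y : Type*} [NormedAddCommGroup X] [NormedSpace ℝ X]
  [NormedAddCommGroup Y] [NormedSpace ℝ Y]

/-! The σ-limit `x̄` of `A_α x` is fixed by every `s ∈ S`, because `s` is σ-continuous and
`s (A_α x) - A_α x → 0` in norm. Each `A_α x` lies in the σ-closed convex hull of the orbit
`S x`, and so does `x̄`; since `x - co(S x) ⊆ span rg(I - S)`, the difference `x - x̄` lies in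
the σ-closure of that span. For the intersection: a fixed `x` is fixed by every `A_α`, so
`⟨x, y⟩ = ⟨x, ȳ⟩` with `ȳ = σ'-lim A'_α y ∈ fix(S')`, and `fix(S')` annihilates `rg(I - S)`,
hence its σ-closed span. As the pairing separates points, `x = 0`. The statement for `Y` is
symmetric. -/

section TopologicalModule

theorem isFixedPt_of_tendsto_sub {E : Type*} [AddGroup E] [TopologicalSpace E] [ContinuousSub E]
    [T2Space E] {κ : Type*} {l : Filter κ} [l.NeBot] {f : E → E} (hf : Continuous f) {u : κ → E}
    {a : E} (hu : Tendsto u l (𝓝 a)) (hfu : Tendsto (fun i => f (u i) - u i) l (𝓝 0)) :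
    Function.IsFixedPt f a :=
  sub_eq_zero.1 <| tendsto_nhds_unique (((hf.tendsto a).comp hu).sub hu) hfu

variable {E : Type*} [AddCommGroup E] [Module ℝ E] [TopologicalSpace E]

theorem sub_mem_closure_of_mem_closure_convexHull [ContinuousSub E] {W : Submodule ℝ E}
    {D : Set E} {x a : E} (hD : ∀ d ∈ D, x - d ∈ W) (ha : a ∈ closure (convexHull ℝ D)) :
    x - a ∈ closure (W : Set E) := by
  have hconv : Convex ℝ ((x - ·) ⁻¹' (W : Set E)) :=
    W.convex.affine_preimage (AffineMap.const ℝ E x - AffineMap.id ℝ E)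
  have hsub : convexHull ℝ D ⊆ (x - ·) ⁻¹' (W : Set E) := convexHull_min hD hconv
  exact (continuous_const.sub continuous_id).closure_preimage_subset _ (closure_mono hsub ha)

theorem eq_of_mem_closure_convexHull_of_subset_singleton [T1Space E] {D : Set E} {x a : E}
    (hD : D ⊆ {x}) (ha : a ∈ closure (convexHull ℝ D)) : a = x := by
  have := closure_mono (convexHull_mono hD) ha
  rwa [convexHull_singleton, closure_singleton] at this

end TopologicalModule

section WeakBilin

variable {E F : Type*} [AddCommGroup E] [Module ℝ E] [AddCommGroup F] [Module ℝ F]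
  {q : E →ₗ[ℝ] F →ₗ[ℝ] ℝ}

theorem WeakBilin.continuous_of_adjoint {f : WeakBilin q → WeakBilin q} {g : F → F}
    (h : ∀ x y, q (f x) y = q x (g y)) : Continuous f :=
  WeakBilin.continuous_of_continuous_eval _ fun y => by
    simpa only [h] using WeakBilin.eval_continuous q (g y)

theorem WeakBilin.apply_eq_zero_of_mem_closure_span {R : Set E} {y : F}
    (hR : ∀ r ∈ R, q r y = 0) {z : E}
    (hz : z ∈ closure (X := WeakBilin q) (Submodule.span ℝ R : Set E)) : q z y = 0 :=
  closure_minimal (X := WeakBilin q)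
    (fun _ hw => Submodule.span_le (p := LinearMap.ker (q.flip y)) |>.2 hR hw)
    (isClosed_singleton.preimage (WeakBilin.eval_continuous q y)) hz

end WeakBilin

section NormedPairing

variable {E F : Type*} [NormedAddCommGroup E] [NormedSpace ℝ E] [NormedAddCommGroup F]
  [NormedSpace ℝ F] {q : E →ₗ[ℝ] F →ₗ[ℝ] ℝ}

theorem abs_apply_le_of_norm_eq_iSup (h : ∀ y : F, ‖y‖ = ⨆ x : {x : E // ‖x‖ ≤ 1}, |q x.1 y|)
    {x : E} (hx : ‖x‖ ≤ 1) (y : F) : |q x y| ≤ ‖y‖ := by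
  by_cases hb : BddAbove (range fun x' : {x : E // ‖x‖ ≤ 1} => |q x'.1 y|)
  · rw [h y]
    exact le_ciSup hb ⟨x, hx⟩
  · have hy : y = 0 := norm_eq_zero.1 (by rw [h y]; exact Real.iSup_of_not_bddAbove hb)
    simp [hy]

theorem continuous_apply_of_norm_eq_iSup
    (h : ∀ y : F, ‖y‖ = ⨆ x : {x : E // ‖x‖ ≤ 1}, |q x.1 y|) (y : F) :
    Continuous fun x => q x y :=
  AddMonoidHomClass.continuous_of_bound (q.flip y) ‖y‖ fun x => by
    simpa using (q.flip y).bound_of_ball_bound' one_pos ‖y‖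
      (fun z hz => abs_apply_le_of_norm_eq_iSup h (mem_closedBall_zero_iff.1 hz) y) x

theorem eq_zero_of_norm_eq_iSup (h : ∀ x : E, ‖x‖ = ⨆ y : {y : F // ‖y‖ ≤ 1}, |q x y.1|)
    {x : E} (hx : ∀ y, q x y = 0) : x = 0 := by
  have : Nonempty {y : F // ‖y‖ ≤ 1} := ⟨⟨0, by simp⟩⟩
  simpa [hx] using h x

end NormedPairing

-- `ndp.sigma` and `ndp.sigma'` are definitionally the topologies of `WeakBilin ndp.p` and
-- `WeakBilin ndp.p.flip`; the general lemmas are applied there via `(E := WeakBilin _)`.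
namespace NormingDualPair

variable (ndp : NormingDualPair X Y)

theorem eq_zero_of_forall_pair_eq_zero {x : X} (hx : ∀ y, ndp.p x y = 0) : x = 0 :=
  eq_zero_of_norm_eq_iSup ndp.norm_eq_left hx

theorem eq_zero_of_forall_pair_eq_zero' {y : Y} (hy : ∀ x, ndp.p x y = 0) : y = 0 :=
  eq_zero_of_norm_eq_iSup (q := ndp.p.flip) ndp.norm_eq_right hy

instance : T2Space (WeakBilin ndp.p) :=
  (WeakBilin.isEmbedding (injective_iff_map_eq_zero _ |>.2 fun _ hx =>
    ndp.eq_zero_of_forall_pair_eq_zero fun y => LinearMap.congr_fun hx y)).t2Space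

instance : T2Space (WeakBilin ndp.p.flip) :=
  (WeakBilin.isEmbedding (injective_iff_map_eq_zero _ |>.2 fun _ hy =>
    ndp.eq_zero_of_forall_pair_eq_zero' fun x => LinearMap.congr_fun hy x)).t2Space

theorem tendsto_sigma {κ : Type*} {l : Filter κ} {u : κ → X} {a : X}
    (hu : Tendsto u l (𝓝 a)) : Tendsto u l (@nhds X ndp.sigma a) :=
  ((WeakBilin.continuous_of_continuous_eval (g := (id : X → WeakBilin ndp.p)) ndp.p
    (continuous_apply_of_norm_eq_iSup ndp.norm_eq_right)).tendsto a).comp hu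

theorem tendsto_sigma' {κ : Type*} {l : Filter κ} {u : κ → Y} {a : Y}
    (hu : Tendsto u l (𝓝 a)) : Tendsto u l (@nhds Y ndp.sigma' a) :=
  ((WeakBilin.continuous_of_continuous_eval (g := (id : Y → WeakBilin ndp.p.flip)) ndp.p.flip
    (continuous_apply_of_norm_eq_iSup (q := ndp.p.flip) ndp.norm_eq_left)).tendsto a).comp hu

end NormingDualPair

namespace AverageScheme

variable {ι : Type*} [Preorder ι] {ndp : NormingDualPair X Y} (AS : AverageScheme ndp ι)

theorem A_apply_of_mem_fixedSpace {x : X} (hx : x ∈ fixedSpace AS.S) (α : ι) : AS.A α x = x :=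
  eq_of_mem_closure_convexHull_of_subset_singleton (E := WeakBilin ndp.p)
    (by rintro _ ⟨s, hs, rfl⟩; exact hx s hs) (AS.as2 α x)

theorem A'_apply_of_mem_fix' {y : Y} (hy : y ∈ AS.fix') (α : ι) : AS.A' α y = y :=
  eq_of_mem_closure_convexHull_of_subset_singleton (E := WeakBilin ndp.p.flip)
    (by rintro _ ⟨s, hs, rfl⟩; exact hy s hs) (AS.as2' α y)

theorem pair_eq_zero_of_mem_closure_span {y : Y} (hy : y ∈ AS.fix') {z : X}
    (hz : z ∈ @closure X ndp.sigma (Submodule.span ℝ (rangeIminus AS.S) : Set X)) :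
    ndp.p z y = 0 :=
  WeakBilin.apply_eq_zero_of_mem_closure_span (by
    rintro _ ⟨x, s, hs, rfl⟩
    rw [map_sub, LinearMap.sub_apply, AS.adj_spec s hs, hy s hs, sub_self]) hz

theorem pair_eq_zero_of_mem_closure_span' {x : X} (hx : x ∈ fixedSpace AS.S) {z : Y}
    (hz : z ∈ @closure Y ndp.sigma' (Submodule.span ℝ AS.rg' : Set Y)) :
    ndp.p x z = 0 :=
  WeakBilin.apply_eq_zero_of_mem_closure_span (q := ndp.p.flip) (by
    rintro _ ⟨y, s, hs, rfl⟩
    rw [LinearMap.flip_apply, map_sub, ← AS.adj_spec s hs, hx s hs, sub_self]) hz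

variable [(atTop : Filter ι).NeBot]

theorem limit_mem_fixedSpace {x l : X}
    (hl : Tendsto (fun α => AS.A α x) atTop (@nhds X ndp.sigma l)) : l ∈ fixedSpace AS.S :=
  fun s hs => isFixedPt_of_tendsto_sub (E := WeakBilin ndp.p)
    (WeakBilin.continuous_of_adjoint (AS.adj_spec s hs)) hl
    (ndp.tendsto_sigma (AS.as3_right s hs x))

theorem limit_mem_fix' {y l : Y}
    (hl : Tendsto (fun α => AS.A' α y) atTop (@nhds Y ndp.sigma' l)) : l ∈ AS.fix' :=
  fun s hs => isFixedPt_of_tendsto_sub (E := WeakBilin ndp.p.flip)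
    (WeakBilin.continuous_of_adjoint fun y x => (AS.adj_spec s hs x y).symm) hl
    (ndp.tendsto_sigma' (AS.as3'_right s hs y))

theorem sub_limit_mem_closure_span {x l : X}
    (hl : Tendsto (fun α => AS.A α x) atTop (@nhds X ndp.sigma l)) :
    x - l ∈ @closure X ndp.sigma (Submodule.span ℝ (rangeIminus AS.S) : Set X) :=
  sub_mem_closure_of_mem_closure_convexHull (E := WeakBilin ndp.p)
    (by rintro _ ⟨s, hs, rfl⟩
        exact Submodule.subset_span (R := ℝ) (s := rangeIminus AS.S) ⟨x, s, hs, rfl⟩)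
    (isClosed_closure.mem_of_tendsto hl (Eventually.of_forall fun α => AS.as2 α x))

theorem sub_limit_mem_closure_span' {y l : Y}
    (hl : Tendsto (fun α => AS.A' α y) atTop (@nhds Y ndp.sigma' l)) :
    y - l ∈ @closure Y ndp.sigma' (Submodule.span ℝ AS.rg' : Set Y) :=
  sub_mem_closure_of_mem_closure_convexHull (E := WeakBilin ndp.p.flip)
    (by rintro _ ⟨s, hs, rfl⟩
        exact Submodule.subset_span (R := ℝ) (s := AS.rg') ⟨y, s, hs, rfl⟩)
    (isClosed_closure.mem_of_tendsto hl (Eventually.of_forall fun α => AS.as2' α y))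

theorem pair_limit'_eq {x : X} (hx : x ∈ fixedSpace AS.S) {y l : Y}
    (hl : Tendsto (fun α => AS.A' α y) atTop (@nhds Y ndp.sigma' l)) :
    ndp.p x l = ndp.p x y := by
  have hconst : ∀ α, ndp.p x (AS.A' α y) = ndp.p x y := fun α => by
    rw [← AS.A'_spec, AS.A_apply_of_mem_fixedSpace hx]
  exact tendsto_nhds_unique (((WeakBilin.eval_continuous ndp.p.flip x).tendsto l).comp hl)
    (tendsto_const_nhds.congr fun α => (hconst α).symm)

theorem pair_limit_eq {y : Y} (hy : y ∈ AS.fix') {x l : X}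
    (hl : Tendsto (fun α => AS.A α x) atTop (@nhds X ndp.sigma l)) :
    ndp.p l y = ndp.p x y := by
  have hconst : ∀ α, ndp.p (AS.A α x) y = ndp.p x y := fun α => by
    rw [AS.A'_spec, AS.A'_apply_of_mem_fix' hy]
  exact tendsto_nhds_unique (((WeakBilin.eval_continuous ndp.p y).tendsto l).comp hl)
    (tendsto_const_nhds.congr fun α => (hconst α).symm)

theorem fixedSpace_inter_closure_span_subset_zero
    (hY : ∀ y : Y, ∃ l : Y, Tendsto (fun α => AS.A' α y) atTop (@nhds Y ndp.sigma' l)) :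
    fixedSpace AS.S ∩ @closure X ndp.sigma (Submodule.span ℝ (rangeIminus AS.S) : Set X) ⊆
      {0} := by
  rintro x ⟨hx, hxW⟩
  refine ndp.eq_zero_of_forall_pair_eq_zero fun y => ?_
  obtain ⟨l, hl⟩ := hY y
  rw [← AS.pair_limit'_eq hx hl]
  exact AS.pair_eq_zero_of_mem_closure_span (AS.limit_mem_fix' hl) hxW

theorem fix'_inter_closure_span_subset_zero
    (hX : ∀ x : X, ∃ l : X, Tendsto (fun α => AS.A α x) atTop (@nhds X ndp.sigma l)) :
    AS.fix' ∩ @closure Y ndp.sigma' (Submodule.span ℝ AS.rg' : Set Y) ⊆ {0} := by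
  rintro y ⟨hy, hyW⟩
  refine ndp.eq_zero_of_forall_pair_eq_zero' fun x => ?_
  obtain ⟨l, hl⟩ := hX x
  rw [← AS.pair_limit_eq hy hl]
  exact AS.pair_eq_zero_of_mem_closure_span' (AS.limit_mem_fixedSpace hl) hyW

end AverageScheme

theorem stmt9 {ι : Type*} [Preorder ι] [Nonempty ι] [IsDirected ι (· ≤ ·)]
    (ndp : NormingDualPair X Y) (AS : AverageScheme ndp ι)
    (h : AS.WeaklyErgodic) :
    ((∀ x : X, ∃ a ∈ fixedSpace AS.S,
        ∃ b ∈ @closure X ndp.sigma (Submodule.span ℝ (rangeIminus AS.S) : Set X), x = a + b) ∧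
      fixedSpace AS.S ∩
        @closure X ndp.sigma (Submodule.span ℝ (rangeIminus AS.S) : Set X) ⊆ {0}) ∧
    ((∀ y : Y, ∃ a ∈ AS.fix',
        ∃ b ∈ @closure Y ndp.sigma' (Submodule.span ℝ AS.rg' : Set Y), y = a + b) ∧
      AS.fix' ∩
        @closure Y ndp.sigma' (Submodule.span ℝ AS.rg' : Set Y) ⊆ {0}) := by
  obtain ⟨hX, hY⟩ := h
  refine ⟨⟨fun x => ?_, AS.fixedSpace_inter_closure_span_subset_zero hY⟩,
    ⟨fun y => ?_, AS.fix'_inter_closure_span_subset_zero hX⟩⟩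
  · obtain ⟨l, hl⟩ := hX x
    exact ⟨l, AS.limit_mem_fixedSpace hl, x - l, AS.sub_limit_mem_closure_span hl, by abel⟩
  · obtain ⟨l, hl⟩ := hY y
    exact ⟨l, AS.limit_mem_fix' hl, y - l, AS.sub_limit_mem_closure_span' hl, by abel⟩
end
end

section
/- Let (S, A) be an average scheme on a norming dual pair (X,Y) such that fix(S) and fix(S') separate each other and fix(S) is finite dimensional. Then X = fix(S) ⊕ span‾^σ rg(I−S) and Y = fix(S') ⊕ span‾^{σ'} rg(I−S'). -/
open Filter Topology Set

noncomputable section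

variable {X Y : Type*} [NormedAddCommGroup X] [NormedSpace ℝ X]
  [NormedAddCommGroup Y] [NormedSpace ℝ Y]

/-! For a pairing `B` between `E` and `G`, and the weak topology `σ(E, G)` on `E`: if the
annihilator in `G` of `F + span R` is zero, then `F + span R` is σ-dense (Hahn–Banach, the σ-dual
of `E` being `G`); if moreover `F` is finite dimensional, `F + closure (span R)` is closed, hence
everything. If some `G' ⊆ G` annihilates `R`, it annihilates `closure (span R)`, and if `G'`
separates `F` the sum is direct.

For `F = fix(𝒮)`, `R = rg(I - 𝒮)`, `G' = fix(𝒮')`: the annihilator of `rg(I - 𝒮)` is exactly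
`fix(𝒮')`, so the first condition is that `fix(𝒮)` separates `fix(𝒮')`, and the second that
`fix(𝒮')` separates `fix(𝒮)`. The roles swap on the `Y` side, where `fix(𝒮')` is finite
dimensional because it embeds into the dual of `fix(𝒮)`. -/

namespace WeakBilin

variable {E G : Type*} [AddCommGroup E] [Module ℝ E] [AddCommGroup G] [Module ℝ G]
  {B : E →ₗ[ℝ] G →ₗ[ℝ] ℝ}

theorem eval_apply (y : G) (x : WeakBilin B) : eval B y x = B x y := rfl

theorem exists_ne_zero_of_notMem_topologicalClosure {D : Submodule ℝ (WeakBilin B)}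
    {x : WeakBilin B} (hx : x ∉ D.topologicalClosure) :
    ∃ y : G, (∀ d ∈ D, B d y = 0) ∧ B x y ≠ 0 := by
  obtain ⟨f, u, hfD, hfx⟩ := geometric_hahn_banach_closed_point
    D.topologicalClosure.convex D.isClosed_topologicalClosure hx
  obtain ⟨y, rfl⟩ := LinearMap.dualEmbedding_surjective B f
  have hu : 0 < u := by simpa using hfD 0 (zero_mem _)
  -- `eval B y` is bounded above by `u` on `D`, but takes the value `u` at `(u / eval B y d) • d`.
  have hD : ∀ d ∈ D, eval B y d = 0 := fun d hd ↦ by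
    by_contra hne
    have := hfD ((u / eval B y d) • d) (D.le_topologicalClosure (D.smul_mem _ hd))
    simp [div_mul_cancel₀ _ hne] at this
  exact ⟨y, hD, by rw [← eval_apply]; linarith⟩

theorem topologicalClosure_eq_top_of_forall_eq_zero {D : Submodule ℝ (WeakBilin B)}
    (hD : ∀ y : G, (∀ d ∈ D, B d y = 0) → y = 0) : D.topologicalClosure = ⊤ := by
  refine eq_top_iff.2 fun x _ ↦ ?_
  by_contra hx
  obtain ⟨y, hy, hxy⟩ := exists_ne_zero_of_notMem_topologicalClosure hx
  simp [hD y hy] at hxy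

theorem eq_zero_of_mem_topologicalClosure {D : Submodule ℝ (WeakBilin B)} {y : G}
    (hy : ∀ d ∈ D, B d y = 0) {x : WeakBilin B} (hx : x ∈ D.topologicalClosure) : B x y = 0 :=
  D.topologicalClosure_minimal (t := LinearMap.ker (eval B y).toLinearMap) hy
    (eval B y).isClosed_ker hx

theorem isCompl_topologicalClosure {F D : Submodule ℝ (WeakBilin B)} [hF : FiniteDimensional ℝ F]
    {G' : Set G} (hdense : ∀ y : G, (∀ x ∈ F, B x y = 0) → (∀ d ∈ D, B d y = 0) → y = 0)
    (horth : ∀ y ∈ G', ∀ d ∈ D, B d y = 0) (hsep : ∀ x ∈ F, (∀ y ∈ G', B x y = 0) → x = 0) :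
    IsCompl F D.topologicalClosure := by
  refine ⟨Submodule.disjoint_def.2 fun x hxF hxD ↦ hsep x hxF fun y hy ↦
    eq_zero_of_mem_topologicalClosure (horth y hy) hxD, codisjoint_iff.2 (eq_top_iff.2 ?_)⟩
  have hclosed : IsClosed (↑(F ⊔ D.topologicalClosure) : Set (WeakBilin B)) := by
    rw [sup_comm]
    exact D.topologicalClosure.isClosed_sup_finiteDimensional F D.isClosed_topologicalClosure
  have hdense' : (F ⊔ D).topologicalClosure = ⊤ :=
    topologicalClosure_eq_top_of_forall_eq_zero fun y hy ↦ hdense y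
      (fun x hx ↦ hy x (Submodule.mem_sup_left hx)) (fun d hd ↦ hy d (Submodule.mem_sup_right hd))
  rw [← hdense']
  exact (F ⊔ D).topologicalClosure_minimal (sup_le_sup_left D.le_topologicalClosure F) hclosed

end WeakBilin

theorem Submodule.exists_add_and_inter_subset_of_isCompl {R M : Type*} [Ring R] [AddCommGroup M]
    [Module R M] {p q : Submodule R M} (h : IsCompl p q) :
    (∀ x : M, ∃ a ∈ p, ∃ b ∈ q, x = a + b) ∧ (p : Set M) ∩ q ⊆ {0} := by
  refine ⟨fun x ↦ ?_, fun x hx ↦ Submodule.disjoint_def.1 h.disjoint x hx.1 hx.2⟩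
  obtain ⟨a, ha, b, hb, hab⟩ := Submodule.mem_sup.1 (h.sup_eq_top ▸ Submodule.mem_top (x := x))
  exact ⟨a, ha, b, hb, hab.symm⟩

theorem LinearMap.finiteDimensional_of_forall_eq_zero {𝕜 E G : Type*} [Field 𝕜] [AddCommGroup E]
    [Module 𝕜 E] [AddCommGroup G] [Module 𝕜 G] (B : E →ₗ[𝕜] G →ₗ[𝕜] 𝕜) {F : Submodule 𝕜 E}
    [FiniteDimensional 𝕜 F] {F' : Submodule 𝕜 G} (h : ∀ y ∈ F', (∀ x ∈ F, B x y = 0) → y = 0) :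
    FiniteDimensional 𝕜 F' :=
  FiniteDimensional.of_injective (F.subtype.dualMap ∘ₗ B.flip ∘ₗ F'.subtype) <|
    (injective_iff_map_eq_zero _).2 fun y hy ↦
      Subtype.ext <| h y y.2 fun x hx ↦ LinearMap.congr_fun hy ⟨x, hx⟩

namespace NormingDualPair

variable (ndp : NormingDualPair X Y)

theorem separatingLeft : ndp.p.SeparatingLeft := fun x hx ↦
  norm_eq_zero.1 (by simp [ndp.norm_eq_left x, hx])

theorem separatingRight : ndp.p.SeparatingRight := fun y hy ↦
  norm_eq_zero.1 (by simp [ndp.norm_eq_right y, hy])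

end NormingDualPair

namespace AverageScheme

variable {ι : Type*} [Preorder ι] {ndp : NormingDualPair X Y} (AS : AverageScheme ndp ι)

def fixedSubmodule' : Submodule ℝ Y where
  carrier := AS.fix'
  add_mem' ha hb s hs := by rw [map_add, ha s hs, hb s hs]
  zero_mem' _ _ := map_zero _
  smul_mem' c _ hy s hs := by rw [map_smul, hy s hs]

theorem mem_fix'_iff_forall_span_rangeIminus {y : Y} :
    y ∈ AS.fix' ↔ ∀ d ∈ Submodule.span ℝ (rangeIminus AS.S), ndp.p d y = 0 := by
  have key : ∀ s ∈ AS.S, ∀ x, ndp.p (x - s x) y = ndp.p x (y - AS.adj s y) := fun s hs x ↦ by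
    simp [AS.adj_spec s hs]
  change _ ↔ Submodule.span ℝ _ ≤ LinearMap.ker (ndp.p.flip y)
  rw [Submodule.span_le]
  constructor
  · rintro hy _ ⟨x, s, hs, rfl⟩
    change ndp.p (x - s x) y = 0
    rw [key s hs, hy s hs, sub_self, map_zero]
  · intro h s hs
    refine (sub_eq_zero.1 (ndp.separatingRight _ fun x ↦ ?_)).symm
    rw [← key s hs]
    exact h ⟨x, s, hs, rfl⟩

theorem mem_fixedSpace_iff_forall_span_rg' {x : X} :
    x ∈ fixedSpace AS.S ↔ ∀ d ∈ Submodule.span ℝ AS.rg', ndp.p x d = 0 := by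
  have key : ∀ s ∈ AS.S, ∀ y, ndp.p x (y - AS.adj s y) = ndp.p (x - s x) y := fun s hs y ↦ by
    simp [AS.adj_spec s hs]
  change _ ↔ Submodule.span ℝ _ ≤ LinearMap.ker (ndp.p x)
  rw [Submodule.span_le]
  constructor
  · rintro hx _ ⟨y, s, hs, rfl⟩
    change ndp.p x (y - AS.adj s y) = 0
    rw [key s hs, hx s hs, sub_self, map_zero, LinearMap.zero_apply]
  · intro h s hs
    refine (sub_eq_zero.1 (ndp.separatingLeft _ fun y ↦ ?_)).symm
    rw [← key s hs]
    exact h ⟨y, s, hs, rfl⟩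

variable {AS}

theorem isCompl_fixedSubmodule_topologicalClosure_span_rangeIminus
    [FiniteDimensional ℝ (fixedSubmodule AS.S)]
    (hsep : ∀ x ∈ fixedSpace AS.S, (∀ y ∈ AS.fix', ndp.p x y = 0) → x = 0)
    (hsep' : ∀ y ∈ AS.fix', (∀ x ∈ fixedSpace AS.S, ndp.p x y = 0) → y = 0) :
    IsCompl (α := Submodule ℝ (WeakBilin ndp.p)) (fixedSubmodule (X := X) AS.S)
      (Submodule.span ℝ (rangeIminus (X := X) AS.S) (M := WeakBilin ndp.p)).topologicalClosure :=
  WeakBilin.isCompl_topologicalClosure (B := ndp.p) (hF := ‹_›) (G' := AS.fix')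
    (fun y hyF hyD ↦ hsep' y (AS.mem_fix'_iff_forall_span_rangeIminus.2 hyD) hyF)
    (fun _ hy ↦ AS.mem_fix'_iff_forall_span_rangeIminus.1 hy) hsep

theorem isCompl_fixedSubmodule'_topologicalClosure_span_rg'
    [FiniteDimensional ℝ AS.fixedSubmodule']
    (hsep : ∀ x ∈ fixedSpace AS.S, (∀ y ∈ AS.fix', ndp.p x y = 0) → x = 0)
    (hsep' : ∀ y ∈ AS.fix', (∀ x ∈ fixedSpace AS.S, ndp.p x y = 0) → y = 0) :
    IsCompl (α := Submodule ℝ (WeakBilin ndp.p.flip)) AS.fixedSubmodule'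
      (Submodule.span ℝ AS.rg' (M := WeakBilin ndp.p.flip)).topologicalClosure :=
  WeakBilin.isCompl_topologicalClosure (B := ndp.p.flip) (hF := ‹_›) (G' := fixedSpace AS.S)
    (fun x hxF hxD ↦ hsep x (AS.mem_fixedSpace_iff_forall_span_rg'.2 hxD) hxF)
    (fun _ hx ↦ AS.mem_fixedSpace_iff_forall_span_rg'.1 hx) hsep'

end AverageScheme

theorem stmt11_general {ι : Type*} [Preorder ι]
    (ndp : NormingDualPair X Y) (AS : AverageScheme ndp ι)
    (hsep : ∀ x ∈ fixedSpace AS.S, x ≠ 0 → ∃ y ∈ AS.fix', ndp.p x y ≠ 0)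
    (hsep' : ∀ y ∈ AS.fix', y ≠ 0 → ∃ x ∈ fixedSpace AS.S, ndp.p x y ≠ 0)
    (hfd : FiniteDimensional ℝ (fixedSubmodule AS.S)) :
    ((∀ x : X, ∃ a ∈ fixedSpace AS.S,
        ∃ b ∈ @closure X ndp.sigma (Submodule.span ℝ (rangeIminus AS.S) : Set X), x = a + b) ∧
      fixedSpace AS.S ∩
        @closure X ndp.sigma (Submodule.span ℝ (rangeIminus AS.S) : Set X) ⊆ {0}) ∧
    ((∀ y : Y, ∃ a ∈ AS.fix',
        ∃ b ∈ @closure Y ndp.sigma' (Submodule.span ℝ AS.rg' : Set Y), y = a + b) ∧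
      AS.fix' ∩
        @closure Y ndp.sigma' (Submodule.span ℝ AS.rg' : Set Y) ⊆ {0}) := by
  have hX : ∀ x ∈ fixedSpace AS.S, (∀ y ∈ AS.fix', ndp.p x y = 0) → x = 0 := fun x hx ↦ by
    contrapose!
    exact hsep x hx
  have hY : ∀ y ∈ AS.fix', (∀ x ∈ fixedSpace AS.S, ndp.p x y = 0) → y = 0 := fun y hy ↦ by
    contrapose!
    exact hsep' y hy
  have : FiniteDimensional ℝ AS.fixedSubmodule' :=
    ndp.p.finiteDimensional_of_forall_eq_zero (F := fixedSubmodule AS.S) hY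
  -- `WeakBilin ndp.p` is `X` with the topology `ndp.sigma`, and `WeakBilin ndp.p.flip` is `Y`
  -- with `ndp.sigma'`, definitionally.
  exact ⟨Submodule.exists_add_and_inter_subset_of_isCompl
      (AS.isCompl_fixedSubmodule_topologicalClosure_span_rangeIminus hX hY),
    Submodule.exists_add_and_inter_subset_of_isCompl
      (AS.isCompl_fixedSubmodule'_topologicalClosure_span_rg' hX hY)⟩

theorem stmt11 {ι : Type*} [Preorder ι] [Nonempty ι] [IsDirected ι (· ≤ ·)]
    (ndp : NormingDualPair X Y) (AS : AverageScheme ndp ι)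
    (hsep : ∀ x ∈ fixedSpace AS.S, x ≠ 0 → ∃ y ∈ AS.fix', ndp.p x y ≠ 0)
    (hsep' : ∀ y ∈ AS.fix', y ≠ 0 → ∃ x ∈ fixedSpace AS.S, ndp.p x y ≠ 0)
    (hfd : FiniteDimensional ℝ (fixedSubmodule AS.S)) :
    ((∀ x : X, ∃ a ∈ fixedSpace AS.S,
        ∃ b ∈ @closure X ndp.sigma (Submodule.span ℝ (rangeIminus AS.S) : Set X), x = a + b) ∧
      fixedSpace AS.S ∩
        @closure X ndp.sigma (Submodule.span ℝ (rangeIminus AS.S) : Set X) ⊆ {0}) ∧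
    ((∀ y : Y, ∃ a ∈ AS.fix',
        ∃ b ∈ @closure Y ndp.sigma' (Submodule.span ℝ AS.rg' : Set Y), y = a + b) ∧
      AS.fix' ∩
        @closure Y ndp.sigma' (Submodule.span ℝ AS.rg' : Set Y) ⊆ {0}) :=
  stmt11_general ndp AS hsep hsep' hfd
end
end

section
/- Let E be a Polish space with complete metric d, and let {T_j : j ∈ J} ⊆ L(C_b(E),σ) be a family of Markovian kernel operators with the e-property such that the family of probability measures {p_j(x,·) : j ∈ J} is tight for every x ∈ E, where p_j is the kernel of T_j. Then for every compact K ⊆ E and every ε > 0 there exists a compact L ⊆ E such that p_j(x, E∖L) ≤ 2ε for all x ∈ K and j ∈ J (i.e. {p_j(x,·) : j ∈ J, x ∈ K} is tight); consequently the operators {T_j} are β₀-equicontinuous. -/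
/-!
By the e-property, `y ↦ ∫ f dp_j(y)` is equicontinuous at every point for each Lipschitz `f`.
Taking for `f` a Lipschitz bump that is `1` on a compact `C` carrying mass `≥ 1 - ε` of all
`p_j(x, ·)` and vanishes outside the `δ`-thickening of `C`, the thickening still carries mass
`≥ 1 - 2ε` of all `p_j(y, ·)` for `y` near `x`. Covering `K` by finitely many such
neighbourhoods gives a compact `C` whose `δ`-thickening carries mass `≥ 1 - 2ε` of all
`p_j(x, ·)`, `x ∈ K`. Choosing `δ = 1/(n+1)` and errors `ε_n` with `∑ ε_n ≤ ε`, the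
intersection of these closed thickenings is closed and totally bounded, hence compact in the
complete space `E`, and its complement has mass at most `∑ ε_n ≤ ε`.
-/

open Filter Topology MeasureTheory Metric Set
open scoped ENNReal NNReal BoundedContinuousFunction

theorem Metric.totallyBounded_of_forall_subset_cthickening {X : Type*} [PseudoMetricSpace X]
    {s : Set X} (h : ∀ δ > 0, ∃ C, IsCompact C ∧ s ⊆ cthickening δ C) : TotallyBounded s := by
  refine totallyBounded_iff.2 fun r hr => ?_
  obtain ⟨C, hC, hsC⟩ := h (r / 2) (half_pos hr)
  obtain ⟨t, ht, hCt⟩ := totallyBounded_iff.1 hC.totallyBounded (r / 2) (half_pos hr)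
  refine ⟨t, ht, fun z hz => ?_⟩
  rw [hC.cthickening_eq_biUnion_closedBall (half_pos hr).le] at hsC
  obtain ⟨c, hc, hzc⟩ := mem_iUnion₂.1 (hsC hz)
  obtain ⟨y, hy, hcy⟩ := mem_iUnion₂.1 (hCt hc)
  refine mem_iUnion₂.2 ⟨y, hy, ?_⟩
  calc dist z y ≤ dist z c + dist c y := dist_triangle z c y
    _ < r / 2 + r / 2 := add_lt_add_of_le_of_lt (mem_closedBall.1 hzc) (mem_ball.1 hcy)
    _ = r := add_halves r

theorem IsCompact.exists_isCompact_forall_of_forall_eventually {X : Type*} [TopologicalSpace X]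
    {K : Set X} (hK : IsCompact K) {P : Set X → X → Prop}
    (hP : ∀ ⦃C C' y⦄, C ⊆ C' → P C y → P C' y)
    (hloc : ∀ x ∈ K, ∃ C, IsCompact C ∧ ∀ᶠ y in 𝓝 x, P C y) :
    ∃ C, IsCompact C ∧ ∀ y ∈ K, P C y := by
  refine hK.induction_on (p := fun S => ∃ C, IsCompact C ∧ ∀ y ∈ S, P C y)
    ⟨∅, isCompact_empty, fun _ h => h.elim⟩
    (fun S S' hSS' ⟨C, hC, hP'⟩ => ⟨C, hC, fun y hy => hP' y (hSS' hy)⟩)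
    (fun S S' ⟨C, hC, hPC⟩ ⟨C', hC', hPC'⟩ => ⟨C ∪ C', hC.union hC', fun y hy => hy.elim
      (fun hy => hP subset_union_left (hPC y hy)) (fun hy => hP subset_union_right (hPC' y hy))⟩)
    fun x hx => ?_
  obtain ⟨C, hC, hev⟩ := hloc x hx
  exact ⟨{y | P C y}, mem_nhdsWithin_of_mem_nhds hev, C, hC, fun y hy => hy⟩

section Measures

variable {X : Type*} [MeasurableSpace X]

theorem exists_isCompact_forall_measure_compl_le_of_cthickening [PseudoMetricSpace X]
    [CompleteSpace X] {ι : Type*} (μ : ι → Measure X)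
    (h : ∀ δ > 0, ∀ ε > 0, ∃ C, IsCompact C ∧ ∀ i, μ i (cthickening δ C)ᶜ ≤ ENNReal.ofReal ε)
    {ε : ℝ} (hε : 0 < ε) : ∃ L, IsCompact L ∧ ∀ i, μ i Lᶜ ≤ ENNReal.ofReal ε := by
  obtain ⟨ε', hε', hsum⟩ := ENNReal.exists_pos_sum_of_countable (ENNReal.ofReal_pos.2 hε).ne' ℕ
  choose C hC hμC using fun n : ℕ => h (1 / (n + 1)) Nat.one_div_pos_of_nat (ε' n) (hε' n)
  have hL : IsCompact (⋂ n : ℕ, cthickening (1 / ((n : ℝ) + 1)) (C n)) := by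
    refine TotallyBounded.isCompact_of_isClosed ?_ (isClosed_iInter fun n => isClosed_cthickening)
    refine totallyBounded_of_forall_subset_cthickening fun δ hδ => ?_
    obtain ⟨n, hn⟩ := exists_nat_one_div_lt hδ
    exact ⟨C n, hC n, (iInter_subset _ n).trans (cthickening_mono hn.le _)⟩
  refine ⟨_, hL, fun i => ?_⟩
  calc μ i (⋂ n : ℕ, cthickening (1 / ((n : ℝ) + 1)) (C n))ᶜ
      = μ i (⋃ n : ℕ, (cthickening (1 / ((n : ℝ) + 1)) (C n))ᶜ) := by rw [compl_iInter]
    _ ≤ ∑' n : ℕ, μ i (cthickening (1 / ((n : ℝ) + 1)) (C n))ᶜ := measure_iUnion_le _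
    _ ≤ ∑' n, (ε' n : ℝ≥0∞) :=
      ENNReal.tsum_le_tsum fun n => (hμC n i).trans_eq ENNReal.ofReal_coe_nnreal
    _ ≤ ENNReal.ofReal ε := hsum.le

theorem measure_compl_le_ofReal_iff {μ : Measure X} [IsProbabilityMeasure μ] {s : Set X}
    (hs : MeasurableSet s) {ε : ℝ} (hε : 0 ≤ ε) :
    μ sᶜ ≤ ENNReal.ofReal ε ↔ 1 - ε ≤ μ.real s := by
  rw [← ofReal_measureReal, ENNReal.ofReal_le_ofReal_iff hε, probReal_compl_eq_one_sub hs,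
    sub_le_comm]

theorem eventually_forall_measure_compl_le_of_equicontinuousAt [TopologicalSpace X]
    [OpensMeasurableSpace X] {J : Type*}
    (p : J → X → Measure X) (hprob : ∀ j x, IsProbabilityMeasure (p j x)) {C U : Set X}
    (hC : MeasurableSet C) (hU : MeasurableSet U) (f : X →ᵇ ℝ)
    (hCf : C.indicator 1 ≤ ⇑f) (hfU : ⇑f ≤ U.indicator 1) {x : X}
    (hequi : EquicontinuousAt (fun j y => ∫ z, f z ∂p j y) x) {ε : ℝ} (hε : 0 < ε)
    (hx : ∀ j, p j x Cᶜ ≤ ENNReal.ofReal ε) :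
    ∀ᶠ y in 𝓝 x, ∀ j, p j y Uᶜ ≤ ENNReal.ofReal (2 * ε) := by
  filter_upwards [Metric.equicontinuousAt_iff_right.1 hequi ε hε] with y hy j
  have hCx : 1 - ε ≤ (p j x).real C := (measure_compl_le_ofReal_iff hC hε.le).1 (hx j)
  have hlower : (p j x).real C ≤ ∫ z, f z ∂p j x := by
    rw [← integral_indicator_one hC]
    exact integral_mono ((integrable_const 1).indicator hC) (f.integrable _) hCf
  have hupper : ∫ z, f z ∂p j y ≤ (p j y).real U := by
    rw [← integral_indicator_one hU]
    exact integral_mono (f.integrable _) ((integrable_const 1).indicator hU) hfU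
  have hclose := (abs_sub_lt_iff.1 (hy j)).1
  rw [measure_compl_le_ofReal_iff hU (by positivity)]
  linarith

end Measures

theorem exists_lipschitz_indicator_le_le_indicator_thickening {X : Type*}
    [PseudoEMetricSpace X] {δ : ℝ} (hδ : 0 < δ) (C : Set X) :
    ∃ f : X →ᵇ ℝ, (∃ c, LipschitzWith c ⇑f) ∧
      C.indicator 1 ≤ ⇑f ∧ ⇑f ≤ (thickening δ C).indicator 1 := by
  refine ⟨(thickenedIndicator hδ C).comp _ NNReal.isometry_coe.lipschitz,
    ⟨_, NNReal.isometry_coe.lipschitz.comp (lipschitzWith_thickenedIndicator hδ C)⟩,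
    fun y => ?_, fun y => ?_⟩
  · by_cases hy : y ∈ C
    · simp [hy, thickenedIndicator_one hδ C hy]
    · simp [hy]
  · by_cases hy : y ∈ thickening δ C
    · simpa [hy] using thickenedIndicator_le_one hδ C y
    · simp [hy, thickenedIndicator_zero hδ C hy]

section Kernels

variable {E : Type*} [MetricSpace E] [MeasurableSpace E] {J : Type*}

theorem equicontinuousAt_integral_of_eProperty
    (T : J → (BoundedContinuousFunction E ℝ) →L[ℝ] (BoundedContinuousFunction E ℝ))
    (p : J → E → Measure E)
    (hker : ∀ (j : J) (f : BoundedContinuousFunction E ℝ) (x : E),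
      (T j f) x = ∫ y, f y ∂(p j x))
    (heprop : ∀ f : BoundedContinuousFunction E ℝ, (∃ c : NNReal, LipschitzWith c ⇑f) →
      ∀ (x : E) (ε : ℝ), 0 < ε → ∃ δ > 0, ∀ (j : J) (y : E),
        dist x y < δ → |(T j f) y - (T j f) x| ≤ ε)
    {f : E →ᵇ ℝ} (hf : ∃ c, LipschitzWith c ⇑f) (x : E) :
    EquicontinuousAt (fun j y => ∫ z, f z ∂p j y) x := by
  refine Metric.equicontinuousAt_iff.2 fun ε hε => ?_
  obtain ⟨δ, hδ, hT⟩ := heprop f hf x (ε / 2) (half_pos hε)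
  refine ⟨δ, hδ, fun y hy j => ?_⟩
  rw [Real.dist_eq, ← hker, ← hker, abs_sub_comm]
  exact (hT j y (dist_comm y x ▸ hy)).trans_lt (half_lt_self hε)

theorem exists_isCompact_forall_measure_compl_cthickening_le [OpensMeasurableSpace E]
    (p : J → E → Measure E) (hprob : ∀ j x, IsProbabilityMeasure (p j x))
    (hequi : ∀ f : E →ᵇ ℝ, (∃ c, LipschitzWith c ⇑f) → ∀ x,
      EquicontinuousAt (fun j y => ∫ z, f z ∂p j y) x)
    (htight : ∀ (x : E) (ε : ℝ), 0 < ε → ∃ K : Set E, IsCompact K ∧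
      ∀ j : J, p j x Kᶜ ≤ ENNReal.ofReal ε)
    {K : Set E} (hK : IsCompact K) {δ : ℝ} (hδ : 0 < δ) {ε : ℝ} (hε : 0 < ε) :
    ∃ C, IsCompact C ∧ ∀ x ∈ K, ∀ j, p j x (cthickening δ C)ᶜ ≤ ENNReal.ofReal ε := by
  refine hK.exists_isCompact_forall_of_forall_eventually
    (fun C C' y hCC' hC j => (measure_mono (compl_subset_compl.2
      (cthickening_subset_of_subset δ hCC'))).trans (hC j)) fun x _ => ?_
  obtain ⟨C, hC, hCx⟩ := htight x (ε / 2) (half_pos hε)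
  obtain ⟨f, hf, hCf, hfU⟩ := exists_lipschitz_indicator_le_le_indicator_thickening hδ C
  refine ⟨C, hC, ?_⟩
  filter_upwards [eventually_forall_measure_compl_le_of_equicontinuousAt p hprob
    hC.isClosed.measurableSet isOpen_thickening.measurableSet f hCf hfU (hequi f hf x)
    (half_pos hε) hCx] with y hy j
  rw [mul_div_cancel₀ ε two_ne_zero] at hy
  exact (measure_mono (compl_subset_compl.2 (thickening_subset_cthickening δ C))).trans (hy j)

end Kernels

theorem stmt17_general {E : Type*} [MetricSpace E] [CompleteSpace E]
    [MeasurableSpace E] [BorelSpace E]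
    {J : Type*}
    (T : J → (BoundedContinuousFunction E ℝ) →L[ℝ] (BoundedContinuousFunction E ℝ))
    (p : J → E → Measure E)
    (hprob : ∀ (j : J) (x : E), IsProbabilityMeasure (p j x))
    (hker : ∀ (j : J) (f : BoundedContinuousFunction E ℝ) (x : E),
      (T j f) x = ∫ y, f y ∂(p j x))
    (heprop : ∀ f : BoundedContinuousFunction E ℝ, (∃ c : NNReal, LipschitzWith c ⇑f) →
      ∀ (x : E) (ε : ℝ), 0 < ε → ∃ δ > 0, ∀ (j : J) (y : E),
        dist x y < δ → |(T j f) y - (T j f) x| ≤ ε)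
    (htight : ∀ (x : E) (ε : ℝ), 0 < ε → ∃ K : Set E, IsCompact K ∧
      ∀ j : J, p j x Kᶜ ≤ ENNReal.ofReal ε) :
    (∀ K : Set E, IsCompact K → ∀ ε : ℝ, 0 < ε → ∃ L : Set E, IsCompact L ∧
      ∀ (j : J), ∀ x ∈ K, p j x Lᶜ ≤ ENNReal.ofReal (2 * ε)) ∧
    (∀ K : Set E, IsCompact K → ∀ ε : ℝ, 0 < ε → ∃ L : Set E, IsCompact L ∧
      ∀ (j : J), ∀ x ∈ K, p j x Lᶜ ≤ ENNReal.ofReal ε) := by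
  have hequi f hf x := equicontinuousAt_integral_of_eProperty T p hker heprop (f := f) hf x
  have htightK : ∀ K : Set E, IsCompact K → ∀ ε : ℝ, 0 < ε → ∃ L : Set E, IsCompact L ∧
      ∀ (j : J), ∀ x ∈ K, p j x Lᶜ ≤ ENNReal.ofReal ε := by
    intro K hK ε hε
    have hthick : ∀ δ > 0, ∀ ε > 0, ∃ C, IsCompact C ∧
        ∀ q : J × K, p q.1 q.2 (cthickening δ C)ᶜ ≤ ENNReal.ofReal ε := fun δ hδ ε hε =>
      let ⟨C, hC, hμC⟩ := exists_isCompact_forall_measure_compl_cthickening_le p hprob hequi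
        htight hK hδ hε
      ⟨C, hC, fun q => hμC q.2 q.2.2 q.1⟩
    obtain ⟨L, hL, hμL⟩ := exists_isCompact_forall_measure_compl_le_of_cthickening _ hthick hε
    exact ⟨L, hL, fun j x hx => hμL (j, ⟨x, hx⟩)⟩
  refine ⟨fun K hK ε hε => ?_, htightK⟩
  obtain ⟨L, hL, hμL⟩ := htightK K hK ε hε
  exact ⟨L, hL, fun j x hx => (hμL j x hx).trans (ENNReal.ofReal_le_ofReal (by linarith))⟩

/-- Lemma 5.5: a family of Markovian kernel operators on `C_b(E)` with the e-property
whose kernels are tight at every point has uniformly tight kernels over compact sets;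
consequently the operators are `β₀`-equicontinuous (characterized by exactly this
uniform tightness over compacts). -/
theorem stmt17 {E : Type*} [MetricSpace E] [CompleteSpace E]
    [TopologicalSpace.SeparableSpace E] [MeasurableSpace E] [BorelSpace E]
    {J : Type*}
    (T : J → (BoundedContinuousFunction E ℝ) →L[ℝ] (BoundedContinuousFunction E ℝ))
    (p : J → E → Measure E)
    (hprob : ∀ (j : J) (x : E), IsProbabilityMeasure (p j x))
    (hker : ∀ (j : J) (f : BoundedContinuousFunction E ℝ) (x : E),
      (T j f) x = ∫ y, f y ∂(p j x))
    (heprop : ∀ f : BoundedContinuousFunction E ℝ, (∃ c : NNReal, LipschitzWith c ⇑f) →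
      ∀ (x : E) (ε : ℝ), 0 < ε → ∃ δ > 0, ∀ (j : J) (y : E),
        dist x y < δ → |(T j f) y - (T j f) x| ≤ ε)
    (htight : ∀ (x : E) (ε : ℝ), 0 < ε → ∃ K : Set E, IsCompact K ∧
      ∀ j : J, p j x Kᶜ ≤ ENNReal.ofReal ε) :
    (∀ K : Set E, IsCompact K → ∀ ε : ℝ, 0 < ε → ∃ L : Set E, IsCompact L ∧
      ∀ (j : J), ∀ x ∈ K, p j x Lᶜ ≤ ENNReal.ofReal (2 * ε)) ∧
    (∀ K : Set E, IsCompact K → ∀ ε : ℝ, 0 < ε → ∃ L : Set E, IsCompact L ∧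
      ∀ (j : J), ∀ x ∈ K, p j x Lᶜ ≤ ENNReal.ofReal ε) :=
  stmt17_general T p hprob hker heprop htight
end

section
/- Consider the norming dual pair (ℓ¹, c₀) and the operator S on ℓ¹ defined by S(x₁, x₂, x₃, …) = (x₁ + x₂, x₃, x₄, …). Then for every n ∈ ℕ, Sⁿx = (x₁ + x₂ + ⋯ + x_{n+1}, x_{n+2}, x_{n+3}, …), and Sⁿx converges in the σ(ℓ¹, c₀) topology to Px := (Σ_{j=1}^∞ x_j, 0, 0, …) for every x ∈ ℓ¹; moreover P* does not map c₀ into c₀, i.e. the ergodic projection P is not σ(ℓ¹,c₀)-continuous. -/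
open Filter Topology

set_option maxHeartbeats 1000000

/-- Example 6.1: on the norming dual pair `(ℓ¹, c₀)`, for the operator
`S(x₁,x₂,x₃,…) = (x₁+x₂, x₃, x₄, …)` one has
`Sⁿx = (x₁+⋯+x_{n+1}, x_{n+2}, …)`, the powers `Sⁿx` converge in `σ(ℓ¹,c₀)` to
`Px = (Σⱼ xⱼ, 0, 0, …)`, but the ergodic projection `P` is not `σ(ℓ¹,c₀)`-continuous:
its adjoint does not map `c₀` into `c₀`. -/
theorem stmt19 (S : lp (fun _ : ℕ => ℝ) 1 →L[ℝ] lp (fun _ : ℕ => ℝ) 1)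
    (hS : ∀ x : lp (fun _ : ℕ => ℝ) 1,
      (S x : ∀ _ : ℕ, ℝ) 0 = (x : ∀ _ : ℕ, ℝ) 0 + (x : ∀ _ : ℕ, ℝ) 1 ∧
      ∀ k : ℕ, 1 ≤ k → (S x : ∀ _ : ℕ, ℝ) k = (x : ∀ _ : ℕ, ℝ) (k + 1)) :
    (∀ (x : lp (fun _ : ℕ => ℝ) 1) (n : ℕ),
      ((S ^ n) x : ∀ _ : ℕ, ℝ) 0 = ∑ j ∈ Finset.range (n + 1), (x : ∀ _ : ℕ, ℝ) j ∧
      ∀ k : ℕ, 1 ≤ k → ((S ^ n) x : ∀ _ : ℕ, ℝ) k = (x : ∀ _ : ℕ, ℝ) (n + k)) ∧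
    (∀ (x : lp (fun _ : ℕ => ℝ) 1) (y : ℕ → ℝ), Tendsto y atTop (nhds 0) →
      Tendsto (fun n : ℕ => ∑' k : ℕ, ((S ^ n) x : ∀ _ : ℕ, ℝ) k * y k) atTop
        (nhds ((∑' j : ℕ, (x : ∀ _ : ℕ, ℝ) j) * y 0))) ∧
    ¬ (∀ y : ℕ → ℝ, Tendsto y atTop (nhds 0) → ∃ z : ℕ → ℝ,
        Tendsto z atTop (nhds 0) ∧ ∀ x : lp (fun _ : ℕ => ℝ) 1,
          (∑' j : ℕ, (x : ∀ _ : ℕ, ℝ) j) * y 0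
            = ∑' j : ℕ, (x : ∀ _ : ℕ, ℝ) j * z j) := by
  -- summability of the coordinates of any ℓ¹ element
  have hsum : ∀ x : lp (fun _ : ℕ => ℝ) 1, Summable (fun k => ‖(x : ∀ _ : ℕ, ℝ) k‖) := by
    intro x
    have h := lp.memℓp x
    have h1 : (0:ℝ) < (1 : ENNReal).toReal := by norm_num
    have := (memℓp_gen_iff h1).1 h
    simpa using this
  -- Part 1
  have key : ∀ (x : lp (fun _ : ℕ => ℝ) 1) (n : ℕ),
      ((S ^ n) x : ∀ _ : ℕ, ℝ) 0 = ∑ j ∈ Finset.range (n + 1), (x : ∀ _ : ℕ, ℝ) j ∧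
      ∀ k : ℕ, 1 ≤ k → ((S ^ n) x : ∀ _ : ℕ, ℝ) k = (x : ∀ _ : ℕ, ℝ) (n + k) := by
    intro x n
    induction n generalizing x with
    | zero => simp
    | succ n ih =>
      have hpow : (S ^ (n + 1)) x = (S ^ n) (S x) := by
        rw [pow_succ]; rfl
      constructor
      · rw [hpow, (ih (S x)).1]
        rw [Finset.sum_range_succ' (fun j => (S x : ∀ _ : ℕ, ℝ) j) n,
          Finset.sum_range_succ' (fun j => (x : ∀ _ : ℕ, ℝ) j) (n + 1),
          Finset.sum_range_succ' (fun j => (x : ∀ _ : ℕ, ℝ) (j + 1)) n]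
        have h0 : (S x : ∀ _ : ℕ, ℝ) 0 = (x : ∀ _ : ℕ, ℝ) 0 + (x : ∀ _ : ℕ, ℝ) 1 := (hS x).1
        have hrest : ∀ i ∈ Finset.range n,
            (S x : ∀ _ : ℕ, ℝ) (i + 1) = (x : ∀ _ : ℕ, ℝ) (i + 1 + 1) := by
          intro i _
          exact (hS x).2 (i + 1) (by omega)
        rw [Finset.sum_congr rfl hrest, h0]
        ring
      · intro k hk
        rw [hpow, (ih (S x)).2 k hk, (hS x).2 (n + k) (by omega)]
        have hnk : n + k + 1 = n + 1 + k := by omega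
        rw [hnk]
  refine ⟨key, ?_, ?_⟩
  · -- Part 2: σ(ℓ¹,c₀)-convergence
    intro x y hy
    -- y is bounded
    obtain ⟨C, hC⟩ : ∃ C : ℝ, ∀ k, |y k| ≤ C := by
      have : Tendsto (fun k => |y k|) atTop (nhds |(0:ℝ)|) := hy.abs
      have hb : BddAbove (Set.range fun k => |y k|) := this.bddAbove_range
      obtain ⟨C, hC⟩ := hb
      exact ⟨C, fun k => hC ⟨k, rfl⟩⟩
    have hC0 : 0 ≤ C := le_trans (abs_nonneg _) (hC 0)
    have hxs : Summable (fun k => ‖(x : ∀ _ : ℕ, ℝ) k‖) := hsum x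
    have hxsum : Summable (fun k => (x : ∀ _ : ℕ, ℝ) k) := hxs.of_norm
    -- rewrite each term
    have hterm : ∀ n : ℕ, (∑' k : ℕ, ((S ^ n) x : ∀ _ : ℕ, ℝ) k * y k)
        = (∑ j ∈ Finset.range (n + 1), (x : ∀ _ : ℕ, ℝ) j) * y 0
          + ∑' k : ℕ, (x : ∀ _ : ℕ, ℝ) (n + (k + 1)) * y (k + 1) := by
      intro n
      have hs : Summable (fun k => ((S ^ n) x : ∀ _ : ℕ, ℝ) k * y k) := by
        apply Summable.of_norm
        exact Summable.of_nonneg_of_le (fun k => norm_nonneg _)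
          (fun k => by
            rw [norm_mul, Real.norm_eq_abs (y k)]
            exact mul_le_mul_of_nonneg_left (hC k) (norm_nonneg _))
          ((hsum ((S ^ n) x)).mul_right C)
      rw [Summable.tsum_eq_zero_add hs, (key x n).1]
      congr 1
      apply tsum_congr
      intro k
      rw [(key x n).2 (k + 1) (by omega)]
    have h1 : Tendsto (fun n : ℕ => (∑ j ∈ Finset.range (n + 1), (x : ∀ _ : ℕ, ℝ) j) * y 0)
        atTop (nhds ((∑' j : ℕ, (x : ∀ _ : ℕ, ℝ) j) * y 0)) := by
      have := hxsum.hasSum.tendsto_sum_nat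
      exact (this.comp (tendsto_add_atTop_nat 1)).mul_const (y 0)
    have h2 : Tendsto (fun n : ℕ => ∑' k : ℕ, (x : ∀ _ : ℕ, ℝ) (n + (k + 1)) * y (k + 1))
        atTop (nhds 0) := by
      have hgt : Tendsto (fun n : ℕ => (∑' k : ℕ, ‖(x : ∀ _ : ℕ, ℝ) (k + (n + 1))‖) * C)
          atTop (nhds 0) := by
        have ht : Tendsto (fun n : ℕ => ∑' k : ℕ, ‖(x : ∀ _ : ℕ, ℝ) (k + n)‖) atTop (nhds 0) :=
          tendsto_sum_nat_add (fun k => ‖(x : ∀ _ : ℕ, ℝ) k‖)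
        have := (ht.comp (tendsto_add_atTop_nat 1)).mul_const C
        simpa using this
      refine squeeze_zero_norm ?_ hgt
      · intro n
        have htail : Summable (fun k => ‖(x : ∀ _ : ℕ, ℝ) (k + (n + 1))‖) :=
          (summable_nat_add_iff (n + 1)).2 hxs
        have hb : ∀ k : ℕ, ‖(x : ∀ _ : ℕ, ℝ) (n + (k + 1)) * y (k + 1)‖
            ≤ ‖(x : ∀ _ : ℕ, ℝ) (k + (n + 1))‖ * C := by
          intro k
          rw [norm_mul, Real.norm_eq_abs (y (k + 1))]
          have hnk : n + (k + 1) = k + (n + 1) := by omega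
          rw [hnk]
          exact mul_le_mul_of_nonneg_left (hC (k + 1)) (norm_nonneg _)
        calc ‖∑' k : ℕ, (x : ∀ _ : ℕ, ℝ) (n + (k + 1)) * y (k + 1)‖
            ≤ ∑' k : ℕ, ‖(x : ∀ _ : ℕ, ℝ) (n + (k + 1)) * y (k + 1)‖ := by
              apply norm_tsum_le_tsum_norm
              exact Summable.of_nonneg_of_le (fun k => norm_nonneg _) hb (htail.mul_right C)
          _ ≤ ∑' k : ℕ, ‖(x : ∀ _ : ℕ, ℝ) (k + (n + 1))‖ * C := by
              apply Summable.tsum_le_tsum hb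
              · exact Summable.of_nonneg_of_le (fun k => norm_nonneg _) hb (htail.mul_right C)
              · exact htail.mul_right C
          _ = (∑' k : ℕ, ‖(x : ∀ _ : ℕ, ℝ) (k + (n + 1))‖) * C := tsum_mul_right
    have := h1.add h2
    rw [add_zero] at this
    refine Tendsto.congr (fun n => (hterm n).symm) this
  · -- Part 3: the projection is not σ(ℓ¹,c₀)-continuous
    intro h
    have hy0 : Tendsto (fun k : ℕ => if k = 0 then (1:ℝ) else 0) atTop (nhds 0) := by
      apply Tendsto.congr' _ tendsto_const_nhds
      filter_upwards [eventually_ge_atTop 1] with k hk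
      simp [Nat.one_le_iff_ne_zero.mp hk]
    obtain ⟨z, hz, hzx⟩ := h (fun k => if k = 0 then (1:ℝ) else 0) hy0
    have hzi : ∀ i : ℕ, z i = 1 := by
      intro i
      have hx := hzx (lp.single 1 i (1:ℝ))
      have hcoord : ∀ j : ℕ, ((lp.single 1 i (1:ℝ) : lp (fun _ : ℕ => ℝ) 1) : ∀ _ : ℕ, ℝ) j
          = if j = i then (1:ℝ) else 0 := by
        intro j
        by_cases hj : j = i
        · subst hj; simp [lp.single_apply_self]
        · simp [lp.single_apply_ne 1 i _ hj, hj]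
      rw [tsum_congr hcoord] at hx
      rw [tsum_congr (f := fun j => ((lp.single 1 i (1:ℝ) : lp (fun _ : ℕ => ℝ) 1) : ∀ _ : ℕ, ℝ) j * z j)
        (g := fun j => if j = i then z i else 0) (by
          intro j
          by_cases hj : j = i
          · subst hj; simp [hcoord]
          · simp [hcoord, hj])] at hx
      rw [show (∑' b : ℕ, if b = i then (1:ℝ) else 0) = 1 from tsum_ite_eq i (fun _ => (1:ℝ)),
        show (∑' b : ℕ, if b = i then z i else 0) = z i from tsum_ite_eq i (fun _ => z i)] at hx
      simpa using hx.symm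
    have : (1:ℝ) = 0 := by
      have hzconst : Tendsto z atTop (nhds (1:ℝ)) := by
        refine Tendsto.congr (fun i => (hzi i).symm) tendsto_const_nhds
      exact tendsto_nhds_unique hzconst hz
    norm_num at this
end
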